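/- Let K be a field and G a finite subgroup of PGL₂(K) with quotient map Q_G. If f ∈ K[x] is a G-invariant monic irreducible polynomial with a root lying in a regular G-orbit (orbit of size |G|), then there exists a monic irreducible F ∈ K[x] such that f = F^{Q_G}. -/

import Mathlib

open Polynomial

attribute [local instance] Classical.propDecidable

noncomputable section

variable (K : Type*) [Field K]

/-- The projective general linear group `PGL₂(K)`. -/
abbrev PGL2 := Matrix.GeneralLinearGroup (Fin 2) K ⧸
  Subgroup.center (Matrix.GeneralLinearGroup (Fin 2) K)

variable {K}

/-- entry of a matrix in `GL₂(K)` -/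
def ent (A : Matrix.GeneralLinearGroup (Fin 2) K) (i j : Fin 2) : K :=
  (A : Matrix (Fin 2) (Fin 2) K) i j

/-- `(cx+d)^n · p((ax+b)/(cx+d))`, the raw (un-normalized) transform. -/
def rawAct (A : Matrix.GeneralLinearGroup (Fin 2) K) (n : ℕ) (p : Polynomial K) :
    Polynomial K :=
  ∑ i ∈ Finset.range (n + 1),
    C (p.coeff i) * (C (ent A 0 0) * X + C (ent A 0 1)) ^ i *
      (C (ent A 1 0) * X + C (ent A 1 1)) ^ (n - i)

/-- The normalized polynomial transformation `[A]∗f`. -/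
def polyAct (A : Matrix.GeneralLinearGroup (Fin 2) K) (f : Polynomial K) : Polynomial K :=
  rawAct A f.natDegree f * C (rawAct A f.natDegree f).leadingCoeff⁻¹

/-- Möbius action of `GL₂(K)` on `K̄ ∪ {∞}`; `none` plays the role of `∞`. -/
def mob (A : Matrix.GeneralLinearGroup (Fin 2) K) :
    Option (AlgebraicClosure K) → Option (AlgebraicClosure K)
  | none =>
      if algebraMap K (AlgebraicClosure K) (ent A 1 0) = 0 then none
      else some (algebraMap K (AlgebraicClosure K) (ent A 0 0) /
        algebraMap K (AlgebraicClosure K) (ent A 1 0))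
  | some x =>
      if algebraMap K (AlgebraicClosure K) (ent A 1 0) * x +
          algebraMap K (AlgebraicClosure K) (ent A 1 1) = 0 then none
      else some ((algebraMap K (AlgebraicClosure K) (ent A 0 0) * x +
          algebraMap K (AlgebraicClosure K) (ent A 0 1)) /
        (algebraMap K (AlgebraicClosure K) (ent A 1 0) * x +
          algebraMap K (AlgebraicClosure K) (ent A 1 1)))

/-- Möbius orbit of a point under a subgroup `G ≤ PGL₂(K)`. -/
def mobOrbit (G : Subgroup (PGL2 K)) (v : Option (AlgebraicClosure K)) :
    Set (Option (AlgebraicClosure K)) :=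
  {w | ∃ A : Matrix.GeneralLinearGroup (Fin 2) K,
    (QuotientGroup.mk A : PGL2 K) ∈ G ∧ mob A v = w}

/-- Orbit of a polynomial under the normalized action of `G ≤ PGL₂(K)`. -/
def polyOrbit (G : Subgroup (PGL2 K)) (r : Polynomial K) : Set (Polynomial K) :=
  {t | ∃ A : Matrix.GeneralLinearGroup (Fin 2) K,
    (QuotientGroup.mk A : PGL2 K) ∈ G ∧ polyAct A r = t}

/-- `f` has no roots in the Möbius `G`-orbit of `∞`. -/
def NoRootsInOrbitInfty (G : Subgroup (PGL2 K)) (f : Polynomial K) : Prop :=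
  ∀ x : AlgebraicClosure K, some x ∈ mobOrbit G none → Polynomial.aeval x f ≠ 0

/-- `f` is `G`-invariant for the normalized polynomial action. -/
def GInvariant (G : Subgroup (PGL2 K)) (f : Polynomial K) : Prop :=
  ∀ A : Matrix.GeneralLinearGroup (Fin 2) K,
    (QuotientGroup.mk A : PGL2 K) ∈ G → polyAct A f = f

/-- `Q_G = g/h` is a quotient map for the finite subgroup `G ≤ PGL₂(K)`:
a `G`-invariant reduced rational function with `g` monic and
`deg h < deg g = |G|` (equivalently, a normalized generator of `K(x)^G`). -/
structure IsQuotientMap (G : Subgroup (PGL2 K)) (g h : Polynomial K) : Prop where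
  monic_g : g.Monic
  h_ne : h ≠ 0
  coprime : IsCoprime g h
  deg_lt : h.natDegree < g.natDegree
  deg_eq : g.natDegree = Nat.card G
  invariant : ∀ A : Matrix.GeneralLinearGroup (Fin 2) K,
    (QuotientGroup.mk A : PGL2 K) ∈ G →
      rawAct A g.natDegree g * h = rawAct A g.natDegree h * g

/-- The `Q`-transform `F^{g/h}(x) = h(x)^{deg F} F(g(x)/h(x))`. -/
def Qtransform (g h F : Polynomial K) : Polynomial K :=
  ∑ i ∈ Finset.range (F.natDegree + 1), C (F.coeff i) * g ^ i * h ^ (F.natDegree - i)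

/-- set of roots of `f` in the algebraic closure -/
def rootSetAC (f : Polynomial K) : Set (AlgebraicClosure K) :=
  {x | Polynomial.aeval x f = 0}

end


noncomputable section Aux
variable {K : Type*} [Field K]

lemma detA_ne_zero (A : Matrix.GeneralLinearGroup (Fin 2) K) :
    (A : Matrix (Fin 2) (Fin 2) K).det ≠ 0 := by
  have h : IsUnit (A : Matrix (Fin 2) (Fin 2) K) := A.isUnit
  rw [Matrix.isUnit_iff_isUnit_det] at h
  exact h.ne_zero

lemma aeval_rawAct (A : Matrix.GeneralLinearGroup (Fin 2) K) (n : ℕ) (p : Polynomial K)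
    (hp : p.natDegree ≤ n) (v : AlgebraicClosure K)
    (he : algebraMap K (AlgebraicClosure K) (ent A 1 0) * v
        + algebraMap K (AlgebraicClosure K) (ent A 1 1) ≠ 0) :
    Polynomial.aeval v (rawAct A n p) =
      (algebraMap K (AlgebraicClosure K) (ent A 1 0) * v
        + algebraMap K (AlgebraicClosure K) (ent A 1 1)) ^ n *
      Polynomial.aeval ((algebraMap K (AlgebraicClosure K) (ent A 0 0) * v
        + algebraMap K (AlgebraicClosure K) (ent A 0 1)) /
        (algebraMap K (AlgebraicClosure K) (ent A 1 0) * v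
        + algebraMap K (AlgebraicClosure K) (ent A 1 1))) p := by
  set φ := algebraMap K (AlgebraicClosure K)
  set e := φ (ent A 1 0) * v + φ (ent A 1 1) with hedef
  set w := (φ (ent A 0 0) * v + φ (ent A 0 1)) / e with hwdef
  have hnum : φ (ent A 0 0) * v + φ (ent A 0 1) = w * e := by
    rw [hwdef, div_mul_cancel₀ _ he]
  have h1 : Polynomial.aeval v (rawAct A n p) =
      ∑ i ∈ Finset.range (n + 1), p.coeff i • w ^ i * e ^ n := by
    rw [rawAct, map_sum]
    refine Finset.sum_congr rfl fun i hi => ?_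
    have hin : i ≤ n := Nat.lt_succ_iff.mp (Finset.mem_range.mp hi)
    simp only [map_mul, map_pow, aeval_C, map_add, aeval_X]
    rw [hnum, mul_pow]
    rw [show p.coeff i • w ^ i * e ^ n = φ (p.coeff i) * (w ^ i * (e ^ i * e ^ (n - i))) by
      rw [← pow_add, Nat.add_sub_cancel' hin, Algebra.smul_def]; ring]
    ring
  rw [h1, ← Finset.sum_mul, mul_comm]
  congr 1
  exact (Polynomial.aeval_eq_sum_range' (Nat.lt_succ_of_le hp) w).symm

lemma mob_some_eq (A : Matrix.GeneralLinearGroup (Fin 2) K) (v : AlgebraicClosure K)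
    (he : algebraMap K (AlgebraicClosure K) (ent A 1 0) * v
        + algebraMap K (AlgebraicClosure K) (ent A 1 1) ≠ 0) :
    mob A (some v) = some ((algebraMap K (AlgebraicClosure K) (ent A 0 0) * v
        + algebraMap K (AlgebraicClosure K) (ent A 0 1)) /
        (algebraMap K (AlgebraicClosure K) (ent A 1 0) * v
        + algebraMap K (AlgebraicClosure K) (ent A 1 1))) := by
  simp [mob, he]

lemma denom_ne_zero (G : Subgroup (PGL2 K)) (f : Polynomial K)
    (hfR : NoRootsInOrbitInfty G f) (A : Matrix.GeneralLinearGroup (Fin 2) K)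
    (hA : (QuotientGroup.mk A : PGL2 K) ∈ G) (v : AlgebraicClosure K)
    (hv : Polynomial.aeval v f = 0) :
    algebraMap K (AlgebraicClosure K) (ent A 1 0) * v
      + algebraMap K (AlgebraicClosure K) (ent A 1 1) ≠ 0 := by
  intro h0
  set φ := algebraMap K (AlgebraicClosure K) with hφ
  have hφinj : Function.Injective φ := (algebraMap K (AlgebraicClosure K)).injective
  have hc : ent A 1 0 ≠ 0 := by
    intro hc0
    have hd0 : ent A 1 1 = 0 := by
      apply hφinj
      simpa [hc0, hφ] using h0
    have := detA_ne_zero A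
    rw [Matrix.det_fin_two] at this
    exact this (by simp [show (A : Matrix (Fin 2) (Fin 2) K) 1 0 = 0 from hc0,
      show (A : Matrix (Fin 2) (Fin 2) K) 1 1 = 0 from hd0])
  -- inverse matrix entries
  have hinv : ((A⁻¹ : Matrix.GeneralLinearGroup (Fin 2) K) : Matrix (Fin 2) (Fin 2) K)
      = ((A : Matrix (Fin 2) (Fin 2) K).det)⁻¹ •
        !![(A : Matrix (Fin 2) (Fin 2) K) 1 1, -(A : Matrix (Fin 2) (Fin 2) K) 0 1;
          -(A : Matrix (Fin 2) (Fin 2) K) 1 0, (A : Matrix (Fin 2) (Fin 2) K) 0 0] := by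
    rw [Matrix.coe_units_inv, Matrix.inv_def, Ring.inverse_eq_inv', Matrix.adjugate_fin_two]
  set dA := (A : Matrix (Fin 2) (Fin 2) K).det with hdA
  have hdAne : dA ≠ 0 := detA_ne_zero A
  have hent10 : ent (A⁻¹) 1 0 = dA⁻¹ * (-(ent A 1 0)) := by
    rw [ent, hinv]; simp [ent]
  have hent00 : ent (A⁻¹) 0 0 = dA⁻¹ * (ent A 1 1) := by
    rw [ent, hinv]; simp [ent]
  have hne : φ (ent (A⁻¹) 1 0) ≠ 0 := by
    rw [hent10]
    simp only [map_mul, map_neg, ne_eq, mul_eq_zero, not_or]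
    constructor
    · exact fun hh => hdAne (by simpa using hφinj (by simpa using hh))
    · exact fun hh => hc (by apply hφinj; simpa using hh)
  have hmob : mob (A⁻¹) none = some v := by
    have : mob (A⁻¹) (none : Option (AlgebraicClosure K)) =
        some (φ (ent (A⁻¹) 0 0) / φ (ent (A⁻¹) 1 0)) := by
      simp [mob, hne]
      exact ⟨fun hh => hne (by rw [hh, map_zero]), rfl⟩
    rw [this]
    congr 1
    rw [hent00, hent10]
    have hφc : φ (ent A 1 0) ≠ 0 := fun hh => hc (by apply hφinj; simpa using hh)
    have hφd : φ (dA⁻¹) ≠ 0 := fun hh => inv_ne_zero hdAne (hφinj (by simpa using hh))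
    have hv' : φ (ent A 1 1) = -(φ (ent A 1 0) * v) := by linear_combination h0
    simp only [map_mul, map_neg]
    rw [mul_div_mul_left _ _ hφd, hv', neg_div_neg_eq, mul_div_cancel_left₀ _ hφc]
  have hmem : some v ∈ mobOrbit G (none : Option (AlgebraicClosure K)) := by
    refine ⟨A⁻¹, ?_, hmob⟩
    have : (QuotientGroup.mk (A⁻¹) : PGL2 K) = (QuotientGroup.mk A : PGL2 K)⁻¹ := rfl
    rw [this]
    exact inv_mem hA
  exact hfR v hmem hv


lemma ncard_le_natDegree {L M : Type*} [Field L] [Field M] [Algebra L M]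
    (p : Polynomial L) (hp : p ≠ 0) (S : Set M) (hS : S.Finite)
    (hroot : ∀ w ∈ S, Polynomial.aeval w p = 0) : S.ncard ≤ p.natDegree := by
  classical
  set q := p.map (algebraMap L M) with hq
  have hq0 : q ≠ 0 := by
    rw [hq, Polynomial.map_ne_zero_iff (algebraMap L M).injective]
    exact hp
  have hsub : hS.toFinset ⊆ q.roots.toFinset := by
    intro w hw
    rw [Set.Finite.mem_toFinset] at hw
    rw [Multiset.mem_toFinset, Polynomial.mem_roots']
    refine ⟨hq0, ?_⟩
    rw [Polynomial.IsRoot, hq, Polynomial.eval_map, ← Polynomial.aeval_def]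
    exact hroot w hw
  calc S.ncard = hS.toFinset.card := by rw [← Set.ncard_coe_finset, hS.coe_toFinset]
    _ ≤ q.roots.toFinset.card := Finset.card_le_card hsub
    _ ≤ Multiset.card q.roots := Multiset.toFinset_card_le _
    _ ≤ q.natDegree := q.card_roots'
    _ = p.natDegree := by rw [hq, Polynomial.natDegree_map]

lemma aeval_Qtransform (g h F : Polynomial K) (v β : AlgebraicClosure K)
    (hβ : Polynomial.aeval v g = β * Polynomial.aeval v h) :
    Polynomial.aeval v (Qtransform g h F) =
      (Polynomial.aeval v h) ^ F.natDegree * Polynomial.aeval β F := by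
  set e := Polynomial.aeval v h with hedef
  have h1 : Polynomial.aeval v (Qtransform g h F) =
      ∑ i ∈ Finset.range (F.natDegree + 1), F.coeff i • β ^ i * e ^ F.natDegree := by
    rw [Qtransform, map_sum]
    refine Finset.sum_congr rfl fun i hi => ?_
    have hin : i ≤ F.natDegree := Nat.lt_succ_iff.mp (Finset.mem_range.mp hi)
    simp only [map_mul, map_pow, aeval_C]
    rw [hβ, mul_pow]
    rw [show F.coeff i • β ^ i * e ^ F.natDegree =
        algebraMap K (AlgebraicClosure K) (F.coeff i) * (β ^ i * (e ^ i * e ^ (F.natDegree - i)))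
      by rw [← pow_add, Nat.add_sub_cancel' hin, Algebra.smul_def]; ring]
    ring
  rw [h1, ← Finset.sum_mul, mul_comm]
  congr 1
  exact (Polynomial.aeval_eq_sum_range' (Nat.lt_succ_of_le le_rfl) β).symm

lemma Qtransform_monic (g h F : Polynomial K) (hg : g.Monic)
    (hh : h.natDegree < g.natDegree) (hF : F.Monic) (hF0 : 0 < F.natDegree) :
    (Qtransform g h F).Monic ∧ (Qtransform g h F).natDegree = F.natDegree * g.natDegree := by
  set n := g.natDegree with hn
  set dF := F.natDegree with hdF
  have hgpow : (g ^ dF).Monic := hg.pow dF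
  have hdeg : (g ^ dF).degree = ((dF * n : ℕ) : WithBot ℕ) := by
    rw [Polynomial.degree_eq_natDegree hgpow.ne_zero, Polynomial.natDegree_pow]
  have hsplit : Qtransform g h F =
      (∑ i ∈ Finset.range dF, C (F.coeff i) * g ^ i * h ^ (dF - i)) + g ^ dF := by
    rw [Qtransform, Finset.sum_range_succ]
    congr 1
    rw [← hdF, Polynomial.Monic.coeff_natDegree hF, Nat.sub_self]
    simp
  have hrest : (∑ i ∈ Finset.range dF, C (F.coeff i) * g ^ i * h ^ (dF - i)).degree
      < (g ^ dF).degree := by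
    rw [hdeg]
    refine lt_of_le_of_lt (Polynomial.degree_sum_le _ _) ?_
    rw [Finset.sup_lt_iff (by exact_mod_cast WithBot.bot_lt_coe _)]
    intro i hi
    have hilt : i < dF := Finset.mem_range.mp hi
    have hnat : (C (F.coeff i) * g ^ i * h ^ (dF - i)).natDegree
        ≤ i * n + (dF - i) * h.natDegree := by
      refine le_trans (Polynomial.natDegree_mul_le) ?_
      refine add_le_add (le_trans (Polynomial.natDegree_mul_le) ?_) ?_
      · simp [Polynomial.natDegree_pow]
        exact le_rfl
      · rw [Polynomial.natDegree_pow]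
    have harith : i * n + (dF - i) * h.natDegree < dF * n := by
      have h1 : (dF - i) * h.natDegree < (dF - i) * n :=
        Nat.mul_lt_mul_of_pos_left hh (by omega)
      calc i * n + (dF - i) * h.natDegree < i * n + (dF - i) * n := by omega
        _ = dF * n := by rw [← Nat.add_mul]; congr 1; omega
    refine lt_of_le_of_lt (Polynomial.degree_le_natDegree) ?_
    exact_mod_cast lt_of_le_of_lt hnat harith
  constructor
  · rw [hsplit]
    exact hgpow.add_of_right hrest
  · rw [hsplit, Polynomial.natDegree_eq_of_degree_eq
      (Polynomial.degree_add_eq_right_of_degree_lt hrest), Polynomial.natDegree_pow]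



open IntermediateField in
lemma conj_root_minpoly_adjoin (f : Polynomial K) (hf : f.Monic) (hfirr : Irreducible f)
    (q₁ q₂ : Polynomial K) (v w : AlgebraicClosure K)
    (hv : Polynomial.aeval v f = 0) (hw : Polynomial.aeval w f = 0)
    (hvw : Polynomial.aeval v q₁ / Polynomial.aeval v q₂
         = Polynomial.aeval w q₁ / Polynomial.aeval w q₂) :
    Polynomial.aeval w
      (minpoly (↥K⟮Polynomial.aeval v q₁ / Polynomial.aeval v q₂⟯) v) = 0 := by
  haveI : Fact (Irreducible f) := ⟨hfirr⟩
  set β := Polynomial.aeval v q₁ / Polynomial.aeval v q₂ with hβ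
  set r := AdjoinRoot.root f with hr
  set ψ : AdjoinRoot f →ₐ[K] AlgebraicClosure K := AdjoinRoot.liftAlgHom f (Algebra.ofId K _) v hv with hψdef
  set φw : AdjoinRoot f →ₐ[K] AlgebraicClosure K := AdjoinRoot.liftAlgHom f (Algebra.ofId K _) w hw with hφwdef
  have hψr : ψ r = v := by rw [hψdef, hr]; exact AdjoinRoot.liftAlgHom_root f _ v hv
  have hφwr : φw r = w := by rw [hφwdef, hr]; exact AdjoinRoot.liftAlgHom_root f _ w hw
  have hψinj : Function.Injective ψ := ψ.toRingHom.injective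
  set b : AdjoinRoot f := Polynomial.aeval r q₁ / Polynomial.aeval r q₂ with hb
  have haev : ∀ (χ : AdjoinRoot f →ₐ[K] AlgebraicClosure K) (q : Polynomial K),
      χ (Polynomial.aeval r q) = Polynomial.aeval (χ r) q := fun χ q =>
    (Polynomial.aeval_algHom_apply χ r q).symm
  have hψb : ψ b = β := by
    rw [hb, map_div₀, haev, haev, hψr]
  have hφwb : φw b = β := by
    rw [hb, map_div₀, haev, haev, hφwr]
    exact hvw.symm
  have hβint : IsIntegral K β := (Algebra.IsAlgebraic.isAlgebraic (R := K) β).isIntegral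
  set pb := IntermediateField.adjoin.powerBasis hβint with hpb
  have hbroot : Polynomial.aeval b (minpoly K pb.gen) = 0 := by
    rw [IntermediateField.adjoin.powerBasis_gen, IntermediateField.minpoly_gen]
    apply hψinj
    rw [map_zero, ← Polynomial.aeval_algHom_apply, hψb]
    exact minpoly.aeval K β
  set τ : ↥K⟮β⟯ →ₐ[K] AdjoinRoot f := pb.lift b hbroot with hτ
  have hτgen : τ pb.gen = b := pb.lift_gen b hbroot
  set ι : ↥K⟮β⟯ →ₐ[K] AlgebraicClosure K :=
    IsScalarTower.toAlgHom K (↥K⟮β⟯) (AlgebraicClosure K) with hι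
  have hgen : (ι pb.gen : AlgebraicClosure K) = β := by
    rw [hι, IntermediateField.adjoin.powerBasis_gen]
    exact IntermediateField.AdjoinSimple.algebraMap_gen K β
  have h1 : ψ.comp τ = ι := pb.algHom_ext (by
    rw [AlgHom.comp_apply, hτgen, hψb, hgen])
  have h2 : φw.comp τ = ι := pb.algHom_ext (by
    rw [AlgHom.comp_apply, hτgen, hφwb, hgen])
  have hvint : IsIntegral K v := (Algebra.IsAlgebraic.isAlgebraic (R := K) v).isIntegral
  have hvE : IsIntegral (↥K⟮β⟯) v := hvint.tower_top
  set p := minpoly (↥K⟮β⟯) v with hp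
  have hmap : algebraMap (↥K⟮β⟯) (AlgebraicClosure K) = ι.toRingHom := rfl
  have heval : ∀ (χ : AdjoinRoot f →ₐ[K] AlgebraicClosure K), χ.comp τ = ι →
      Polynomial.aeval (χ r) p = χ (Polynomial.eval r (p.map τ.toRingHom)) := by
    intro χ hχ
    rw [Polynomial.aeval_def, hmap, ← hχ]
    rw [show (χ.comp τ).toRingHom = χ.toRingHom.comp τ.toRingHom from rfl,
      ← Polynomial.eval₂_map]
    exact Polynomial.eval₂_at_apply χ.toRingHom r
  have hz : Polynomial.eval r (p.map τ.toRingHom) = 0 := by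
    apply hψinj
    rw [map_zero, ← heval ψ h1, hψr]
    exact minpoly.aeval _ v
  rw [← hφwr, heval φw h2, hz, map_zero]



open IntermediateField in
lemma natDegree_minpoly_factor (v β : AlgebraicClosure K)
    (hβ : β ∈ (adjoin K {v} : IntermediateField K (AlgebraicClosure K))) :
    (minpoly K v).natDegree =
      (minpoly K β).natDegree * (minpoly (↥K⟮β⟯) v).natDegree := by
  have hvint : IsIntegral K v := (Algebra.IsAlgebraic.isAlgebraic (R := K) v).isIntegral
  have hβint : IsIntegral K β := (Algebra.IsAlgebraic.isAlgebraic (R := K) β).isIntegral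
  haveI : FiniteDimensional K ↥K⟮β⟯ := IntermediateField.adjoin.finiteDimensional hβint
  have hvE : IsIntegral (↥K⟮β⟯) v := hvint.tower_top
  set N : IntermediateField (↥K⟮β⟯) (AlgebraicClosure K) := adjoin (↥K⟮β⟯) {v} with hN
  haveI : FiniteDimensional (↥K⟮β⟯) ↥N := IntermediateField.adjoin.finiteDimensional hvE
  have h1 : Module.finrank K ↥K⟮β⟯ = (minpoly K β).natDegree :=
    IntermediateField.adjoin.finrank hβint
  have h2 : Module.finrank (↥K⟮β⟯) ↥N = (minpoly (↥K⟮β⟯) v).natDegree :=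
    IntermediateField.adjoin.finrank hvE
  have h3 : Module.finrank K ↥K⟮β⟯ * Module.finrank (↥K⟮β⟯) ↥N = Module.finrank K ↥N :=
    Module.finrank_mul_finrank K (↥K⟮β⟯) ↥N
  have h4 : N.restrictScalars K = adjoin K {v} := by
    rw [hN, IntermediateField.adjoin_adjoin_left]
    apply le_antisymm
    · rw [IntermediateField.adjoin_le_iff]
      intro x hx
      rcases hx with hx | hx
      · exact hx ▸ hβ
      · exact hx ▸ IntermediateField.subset_adjoin K {v} rfl
    · apply IntermediateField.adjoin.mono
      exact Set.subset_union_right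
  have h5 : Module.finrank K ↥(N.restrictScalars K) = Module.finrank K ↥N := rfl
  rw [← IntermediateField.adjoin.finrank hvint, ← h4, h5, ← h3, h1, h2]


end Aux

theorem invariant_irreducible_is_transform {K : Type*} [Field K] (G : Subgroup (PGL2 K))
    (hGfin : (G : Set (PGL2 K)).Finite) (g h : Polynomial K) (hQ : IsQuotientMap G g h)
    (f : Polynomial K) (hf : f.Monic) (hfirr : Irreducible f)
    (hfR : NoRootsInOrbitInfty G f) (hfinv : GInvariant G f)
    (hreg : ∃ v : AlgebraicClosure K, Polynomial.aeval v f = 0 ∧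
      (mobOrbit G (some v)).ncard = Nat.card G) :
    ∃ F : Polynomial K, F.Monic ∧ Irreducible F ∧ f = Qtransform g h F := by
  classical
  obtain ⟨v, hv0, hcard⟩ := hreg
  set φ := algebraMap K (AlgebraicClosure K) with hφ
  have hφinj : Function.Injective φ := φ.injective
  set n := Nat.card ↥G with hn
  have hn0 : 0 < n := by
    haveI : Finite ↥G := hGfin.to_subtype
    exact Nat.card_pos
  have hfne : f ≠ 0 := hf.ne_zero
  have hden : ∀ A : Matrix.GeneralLinearGroup (Fin 2) K,
      (QuotientGroup.mk A : PGL2 K) ∈ G →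
      φ (ent A 1 0) * v + φ (ent A 1 1) ≠ 0 := fun A hA =>
    denom_ne_zero G f hfR A hA v hv0
  set S : Set (AlgebraicClosure K) := {w | some w ∈ mobOrbit G (some v)} with hS
  have horb : mobOrbit G (some v) = some '' S := by
    ext x
    constructor
    · rintro ⟨A, hA, hAx⟩
      have he := hden A hA
      rw [mob_some_eq A v he] at hAx
      exact ⟨_, ⟨A, hA, hAx ▸ mob_some_eq A v he⟩, hAx⟩
    · rintro ⟨w, hw, rfl⟩
      exact hw
  have hScard : S.ncard = n := by
    rw [← hcard, horb, Set.ncard_image_of_injective _ (Option.some_injective _)]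
  have hSfin : S.Finite := by
    by_contra hinf
    rw [Set.Infinite.ncard hinf] at hScard
    omega
  have hstep : ∀ w ∈ S, Polynomial.aeval w f = 0 ∧
      Polynomial.aeval w g * Polynomial.aeval v h
        = Polynomial.aeval w h * Polynomial.aeval v g := by
    intro w hw
    obtain ⟨A, hA, hAw⟩ := hw
    have he := hden A hA
    rw [mob_some_eq A v he] at hAw
    have hweq : w = (φ (ent A 0 0) * v + φ (ent A 0 1)) /
        (φ (ent A 1 0) * v + φ (ent A 1 1)) := (Option.some_injective _ hAw).symm
    constructor
    · have hpa := hfinv A hA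
      have hraw0 : rawAct A f.natDegree f ≠ 0 := by
        intro h0
        apply hfne
        rw [← hpa, polyAct, h0, zero_mul]
      have hlc : φ (rawAct A f.natDegree f).leadingCoeff⁻¹ ≠ 0 := by
        intro h0
        exact inv_ne_zero (Polynomial.leadingCoeff_ne_zero.mpr hraw0)
          (hφinj (by simpa using h0))
      have hthis := congrArg (Polynomial.aeval v) hpa
      rw [polyAct, map_mul, aeval_C, aeval_rawAct A f.natDegree f le_rfl v he, hv0,
        ← hweq] at hthis
      rcases mul_eq_zero.mp hthis with h3 | h3
      · rcases mul_eq_zero.mp h3 with h4 | h4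
        · exact absurd h4 (pow_ne_zero _ he)
        · exact h4
      · exact absurd h3 hlc
    · have hid := hQ.invariant A hA
      have hthis := congrArg (Polynomial.aeval v) hid
      rw [map_mul, map_mul, aeval_rawAct A g.natDegree g le_rfl v he,
        aeval_rawAct A g.natDegree h hQ.deg_lt.le v he, ← hweq] at hthis
      have hepow := pow_ne_zero g.natDegree he
      apply mul_left_cancel₀ hepow
      linear_combination hthis
  have hnotboth : ∀ u : AlgebraicClosure K,
      ¬(Polynomial.aeval u g = 0 ∧ Polynomial.aeval u h = 0) := by
    obtain ⟨a, b, hab⟩ := hQ.coprime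
    rintro u ⟨hug, huh⟩
    have hthis := congrArg (Polynomial.aeval u) hab
    simp [hug, huh] at hthis
  have hhv : Polynomial.aeval v h ≠ 0 := by
    intro hhv0
    have hroots : ∀ w ∈ S, Polynomial.aeval w h = 0 := by
      intro w hwS
      obtain ⟨hwf, hcross⟩ := hstep w hwS
      rw [hhv0, mul_zero] at hcross
      rcases mul_eq_zero.mp hcross.symm with h1 | h1
      · exact h1
      · exact absurd ⟨h1, hhv0⟩ (hnotboth v)
    have hle := ncard_le_natDegree h hQ.h_ne S hSfin hroots
    rw [hScard] at hle
    have hlt := hQ.deg_lt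
    rw [hQ.deg_eq, ← hn] at hlt
    omega
  have hwh : ∀ w ∈ S, Polynomial.aeval w h ≠ 0 := by
    intro w hwS hwh0
    obtain ⟨_, hcross⟩ := hstep w hwS
    rw [hwh0, zero_mul] at hcross
    rcases mul_eq_zero.mp hcross with h1 | h1
    · exact hnotboth w ⟨h1, hwh0⟩
    · exact hhv h1
  set β := Polynomial.aeval v g / Polynomial.aeval v h with hβdef
  have hβint : IsIntegral K β := (Algebra.IsAlgebraic.isAlgebraic (R := K) β).isIntegral
  set F := minpoly K β with hF
  have hFmonic : F.Monic := minpoly.monic hβint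
  have hFirr : Irreducible F := minpoly.irreducible hβint
  have hF0 : 0 < F.natDegree := minpoly.natDegree_pos hβint
  have hβh : Polynomial.aeval v g = β * Polynomial.aeval v h := by
    rw [hβdef, div_mul_cancel₀ _ hhv]
  have hfv : f = minpoly K v := minpoly.eq_of_irreducible_of_monic hfirr hv0 hf
  have hTv : Polynomial.aeval v (Qtransform g h F) = 0 := by
    rw [aeval_Qtransform g h F v β hβh, hF, minpoly.aeval, mul_zero]
  have hdvd : f ∣ Qtransform g h F := by
    rw [hfv]; exact minpoly.dvd K v hTv
  obtain ⟨hTmonic, hTdeg⟩ := Qtransform_monic g h F hQ.monic_g hQ.deg_lt hFmonic hF0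
  have hvint : IsIntegral K v := (Algebra.IsAlgebraic.isAlgebraic (R := K) v).isIntegral
  have hvE : IsIntegral (↥(IntermediateField.adjoin K {β})) v := hvint.tower_top
  have hm : n ≤ (minpoly (↥(IntermediateField.adjoin K {β})) v).natDegree := by
    rw [← hScard]
    refine ncard_le_natDegree _ (minpoly.ne_zero hvE) S hSfin ?_
    intro w hwS
    obtain ⟨hwf, hcross⟩ := hstep w hwS
    have hvw : Polynomial.aeval v g / Polynomial.aeval v h
        = Polynomial.aeval w g / Polynomial.aeval w h := by
      rw [div_eq_div_iff hhv (hwh w hwS)]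
      linear_combination hcross.symm
    exact conj_root_minpoly_adjoin f hf hfirr g h v w hv0 hwf hvw
  have hβmem : β ∈ (IntermediateField.adjoin K {v} :
      IntermediateField K (AlgebraicClosure K)) := by
    have hmem : ∀ p : Polynomial K, Polynomial.aeval v p ∈
        (IntermediateField.adjoin K {v} : IntermediateField K (AlgebraicClosure K)) := by
      intro p
      have h1 : Polynomial.aeval v p ∈ Algebra.adjoin K {v} := by
        rw [Algebra.adjoin_singleton_eq_range_aeval]
        exact ⟨p, rfl⟩
      exact IntermediateField.algebra_adjoin_le_adjoin K {v} h1
    rw [hβdef]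
    exact div_mem (hmem g) (hmem h)
  have hdegf : f.natDegree
      = F.natDegree * (minpoly (↥(IntermediateField.adjoin K {β})) v).natDegree := by
    rw [hfv, hF]
    exact natDegree_minpoly_factor v β hβmem
  have hlow : F.natDegree * n ≤ f.natDegree := by
    rw [hdegf]
    exact Nat.mul_le_mul_left _ hm
  have hTdeg' : (Qtransform g h F).natDegree = F.natDegree * n := by
    rw [hTdeg, hQ.deg_eq, ← hn]
  have hup : f.natDegree ≤ F.natDegree * n := by
    rw [← hTdeg']
    exact Polynomial.natDegree_le_of_dvd hdvd hTmonic.ne_zero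
  have hdeq : f.natDegree = (Qtransform g h F).natDegree := by
    rw [hTdeg']
    exact le_antisymm hup hlow
  obtain ⟨u, hu⟩ := hdvd
  have hu0 : u ≠ 0 := by
    intro h0
    rw [h0, mul_zero] at hu
    exact hTmonic.ne_zero hu
  have hudeg : u.natDegree = 0 := by
    have hmul := Polynomial.natDegree_mul hfne hu0
    rw [← hu, ← hdeq] at hmul
    omega
  have hulc : u.leadingCoeff = 1 := by
    have h1 : (Qtransform g h F).leadingCoeff = f.leadingCoeff * u.leadingCoeff := by
      rw [hu, Polynomial.leadingCoeff_mul]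
    rw [hTmonic.leadingCoeff, hf.leadingCoeff, one_mul] at h1
    exact h1.symm
  have huone : u = 1 := by
    have h2 := Polynomial.eq_C_of_natDegree_eq_zero hudeg
    rw [h2]
    have h3 : u.coeff 0 = 1 := by
      rwa [Polynomial.leadingCoeff, hudeg] at hulc
    rw [h3, map_one]
  refine ⟨F, hFmonic, hFirr, ?_⟩
  rw [hu, huone, mul_one]
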